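/- Let n = 2m+1 and set D = n−3 = 2m−2. In the graded ring H = ℚ[α,β,δ_1,…,δ_n]/(I), where I is generated by δ_i² − β for all i together with the relations R^J = r_{m−|J|}(α,β)·∏_{k∈J}δ_k for all subsets J ⊆ {1,…,n} with |J| ≤ m (with r_k defined by r_0 = 1, r_1 = α, r_{k+1} = α r_k − k² β r_{k−1}), every monomial α^a β^b ∏_{k∈J} δ_k with a + b + |J| ≥ m lies in the ideal generated by the images of monomials of lower α-β-δ total weight together with I; equivalently, the monomials α^a β^b ∏_{k∈J} δ_k with a + b + |J| < m span H as a ℚ-vector space. -/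

import Mathlib

/-!
Call `a + b + |J|` the weight of `α^a β^b δ_J`; since `δ_i² = β`, these monomials span `H`.
A monomial with `|J| ≥ m` vanishes, because `R^{J'} = δ_{J'}` for `|J'| = m`. Otherwise take
`c = min(b, m - |J|)` and `d = m - |J| - c ≤ a`, and write `β^c = δ_K²` with `K` disjoint from `J`.
The relation `R^{K ∪ J} = r_d δ_K δ_J` gives `α^d β^c δ_J = (α^d - r_d) β^c δ_J`, and every step
of the recursion for `r_d` trades `α²` for `β`, so `α^d - r_d` is a combination of `α^e β^f` with
`e + f < d`. Hence every monomial of weight `≥ m` is a combination of monomials of lower weight.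
-/

open MvPolynomial

/-- The polynomials `r_k(α, β)` (`r_0 = 1`, `r_1 = α`, `r_{k+1} = α r_k − k² β r_{k−1}`)
inside `ℚ[α, β, δ_1, …, δ_N]`, where variable `0` is `α` and variable `1` is `β`. -/
noncomputable def rPoly (N : ℕ) : ℕ → MvPolynomial (Fin (N + 2)) ℚ
  | 0 => 1
  | 1 => X 0
  | (k + 2) => X 0 * rPoly N (k + 1) - C ((k + 1 : ℚ) ^ 2) * (X 1 * rPoly N k)

/-- The ideal of relations for `n = 2m+1`: generated by `δ_i² − β` for all `i` and
the relations `R^J = r_{m−|J|}(α,β)·∏_{k∈J} δ_k` for all `J ⊆ {1,…,n}` with `|J| ≤ m`. -/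
noncomputable def relIdeal (m : ℕ) : Ideal (MvPolynomial (Fin (2 * m + 1 + 2)) ℚ) :=
  Ideal.span
    ((Set.range fun i : Fin (2 * m + 1) =>
        (X i.succ.succ : MvPolynomial (Fin (2 * m + 1 + 2)) ℚ) ^ 2 - X 1) ∪
      {q | ∃ J : Finset (Fin (2 * m + 1)), J.card ≤ m ∧
        q = rPoly (2 * m + 1) (m - J.card) * ∏ k ∈ J, X k.succ.succ})

section AlphaBetaSpan

variable (N : ℕ)

noncomputable def alphaBetaSpan (d : ℕ) : Submodule ℚ (MvPolynomial (Fin (N + 2)) ℚ) :=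
  Submodule.span ℚ ((fun p : ℕ × ℕ => X 0 ^ p.1 * X 1 ^ p.2) '' {p | p.1 + p.2 < d})

variable {N}

theorem X_pow_mul_X_pow_mul_mem_alphaBetaSpan {d d' : ℕ} (i j : ℕ) (h : d + i + j ≤ d')
    {x : MvPolynomial (Fin (N + 2)) ℚ} (hx : x ∈ alphaBetaSpan N d) :
    X 0 ^ i * X 1 ^ j * x ∈ alphaBetaSpan N d' := by
  refine Submodule.span_mono ?_
    (Submodule.image_span_subset_span (LinearMap.mulLeft ℚ (X 0 ^ i * X 1 ^ j)) _ ⟨x, hx, rfl⟩)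
  rintro _ ⟨_, ⟨⟨e, f⟩, hef, rfl⟩, rfl⟩
  change e + f < d at hef
  exact ⟨(i + e, j + f), show i + e + (j + f) < d' by omega, by
    simp only [LinearMap.mulLeft_apply]; ring⟩

theorem rPoly_sub_X_pow_mem_alphaBetaSpan : ∀ d, rPoly N d - X 0 ^ d ∈ alphaBetaSpan N d
  | 0 => by simp [rPoly]
  | 1 => by simp [rPoly]
  | k + 2 => by
    have hα := X_pow_mul_X_pow_mul_mem_alphaBetaSpan 1 0 le_rfl
      (rPoly_sub_X_pow_mem_alphaBetaSpan (k + 1))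
    have hβ := X_pow_mul_X_pow_mul_mem_alphaBetaSpan (d' := k + 2) 0 1 (by omega)
      (rPoly_sub_X_pow_mem_alphaBetaSpan k)
    have hαβ : X 0 ^ k * X 1 ^ 1 ∈ alphaBetaSpan N (k + 2) :=
      Submodule.subset_span ⟨(k, 1), by simp, rfl⟩
    have e : rPoly N (k + 2) - X 0 ^ (k + 2) =
        X 0 ^ 1 * X 1 ^ 0 * (rPoly N (k + 1) - X 0 ^ (k + 1))
        - ((k + 1 : ℚ) ^ 2) • (X 0 ^ 0 * X 1 ^ 1 * (rPoly N k - X 0 ^ k))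
        - ((k + 1 : ℚ) ^ 2) • (X 0 ^ k * X 1 ^ 1) := by
      simp only [rPoly, smul_eq_C_mul]; ring
    rw [e]
    exact sub_mem (sub_mem hα (Submodule.smul_mem _ _ hβ)) (Submodule.smul_mem _ _ hαβ)

end AlphaBetaSpan

section Quotient

variable {m : ℕ}

local notation "π" => Ideal.Quotient.mk (relIdeal m)

variable (m) in
noncomputable abbrev quotMonomial (a b : ℕ) (J : Finset (Fin (2 * m + 1))) :
    MvPolynomial (Fin (2 * m + 1 + 2)) ℚ ⧸ relIdeal m :=
  π (X 0 ^ a * X 1 ^ b * ∏ k ∈ J, X k.succ.succ)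

variable (m) in
noncomputable abbrev monomialSpan (w : ℕ) :
    Submodule ℚ (MvPolynomial (Fin (2 * m + 1 + 2)) ℚ ⧸ relIdeal m) :=
  Submodule.span ℚ
    ((fun t : ℕ × ℕ × Finset (Fin (2 * m + 1)) => quotMonomial m t.1 t.2.1 t.2.2) ''
      {t | t.1 + t.2.1 + t.2.2.card < w})

theorem quotMonomial_eq (a b : ℕ) (J : Finset (Fin (2 * m + 1))) :
    quotMonomial m a b J = π (X 0) ^ a * π (X 1) ^ b * ∏ k ∈ J, π (X k.succ.succ) := by
  simp only [map_mul, map_pow, map_prod]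

theorem mk_X_succ_succ_sq (i : Fin (2 * m + 1)) : π (X i.succ.succ) ^ 2 = π (X 1) := by
  rw [← map_pow, ← sub_eq_zero, ← map_sub, Ideal.Quotient.eq_zero_iff_mem]
  exact Ideal.subset_span (Or.inl ⟨i, rfl⟩)

theorem prod_mk_X_succ_succ_sq (K : Finset (Fin (2 * m + 1))) :
    (∏ k ∈ K, π (X k.succ.succ)) ^ 2 = π (X 1) ^ K.card := by
  simp only [← Finset.prod_pow, mk_X_succ_succ_sq, Finset.prod_const]

theorem mk_rPoly_mul_prod_eq_zero {J : Finset (Fin (2 * m + 1))} (hJ : J.card ≤ m) :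
    π (rPoly (2 * m + 1) (m - J.card)) * ∏ k ∈ J, π (X k.succ.succ) = 0 := by
  rw [← map_prod, ← map_mul, Ideal.Quotient.eq_zero_iff_mem]
  exact Ideal.subset_span (Or.inr ⟨J, hJ, rfl⟩)

theorem prod_mk_X_succ_succ_eq_zero {J : Finset (Fin (2 * m + 1))} (hJ : m ≤ J.card) :
    ∏ k ∈ J, π (X k.succ.succ) = 0 := by
  obtain ⟨J', hJ'J, hJ'⟩ := Finset.exists_subset_card_eq hJ
  have h := mk_rPoly_mul_prod_eq_zero (m := m) hJ'.le
  rw [hJ', Nat.sub_self, rPoly, map_one, one_mul] at h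
  rw [← Finset.prod_sdiff hJ'J, h, mul_zero]

/-- Write `β^c = δ_K²` with `K` disjoint from `J` and use the relation `R^{K ∪ J}`. -/
theorem mk_rPoly_mul_pow_mul_prod_eq_zero {J : Finset (Fin (2 * m + 1))} {c : ℕ}
    (h : J.card + c ≤ m) :
    π (rPoly (2 * m + 1) (m - J.card - c)) * π (X 1) ^ c * ∏ k ∈ J, π (X k.succ.succ) = 0 := by
  obtain ⟨K, hKJ, hK⟩ := Finset.exists_subset_card_eq (s := Jᶜ) (n := c)
    (by rw [Finset.card_compl, Fintype.card_fin]; omega)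
  have hdisj : Disjoint K J := Finset.subset_compl_iff_disjoint_right.mp hKJ
  have hrel := mk_rPoly_mul_prod_eq_zero (m := m) (J := K ∪ J)
    (by rw [Finset.card_union_of_disjoint hdisj]; omega)
  subst hK
  rw [Finset.card_union_of_disjoint hdisj, Finset.prod_union hdisj,
    show m - (K.card + J.card) = m - J.card - K.card by omega] at hrel
  rw [← prod_mk_X_succ_succ_sq K]
  linear_combination (∏ k ∈ K, π (X k.succ.succ)) * hrel

theorem quotMonomial_mem_monomialSpan_of_le {a b : ℕ} {J : Finset (Fin (2 * m + 1))}
    (h : m ≤ a + b + J.card) : quotMonomial m a b J ∈ monomialSpan m (a + b + J.card) := by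
  by_cases hJ : m ≤ J.card
  · rw [quotMonomial_eq, prod_mk_X_succ_succ_eq_zero hJ, mul_zero]
    exact zero_mem _
  obtain ⟨c, hcb, hcJ, hda⟩ : ∃ c ≤ b, J.card + c ≤ m ∧ m - J.card - c ≤ a :=
    ⟨min b (m - J.card), by omega, by omega, by omega⟩
  set d := m - J.card - c
  obtain ⟨a, rfl⟩ : ∃ a', a = a' + d := ⟨a - d, by omega⟩
  obtain ⟨b, rfl⟩ : ∃ b', b = b' + c := ⟨b - c, by omega⟩
  set y := π (X 0) ^ a * π (X 1) ^ (b + c) * ∏ k ∈ J, π (X k.succ.succ)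
  have hmono : quotMonomial m (a + d) (b + c) J = -(y * π (rPoly (2 * m + 1) d - X 0 ^ d)) := by
    rw [quotMonomial_eq, map_sub, map_pow]
    linear_combination (π (X 0) ^ a * π (X 1) ^ b) * mk_rPoly_mul_pow_mul_prod_eq_zero hcJ
  rw [hmono]
  refine neg_mem (Submodule.span_mono ?_ (Submodule.image_span_subset_span
    ((LinearMap.mulLeft ℚ y).comp (Ideal.Quotient.mkₐ ℚ (relIdeal m)).toLinearMap) _
    ⟨_, rPoly_sub_X_pow_mem_alphaBetaSpan d, rfl⟩))
  rintro _ ⟨_, ⟨⟨e, f⟩, hef, rfl⟩, rfl⟩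
  change e + f < d at hef
  refine ⟨(a + e, b + c + f, J), show a + e + (b + c + f) + J.card < a + d + (b + c) + J.card by
    omega, ?_⟩
  simp only [LinearMap.comp_apply, LinearMap.mulLeft_apply, y, AlgHom.toLinearMap_apply,
    Ideal.Quotient.mkₐ_eq_mk, map_mul, map_pow, map_prod]
  ring

theorem monomialSpan_succ_le {w : ℕ} (hw : m ≤ w) : monomialSpan m (w + 1) ≤ monomialSpan m w := by
  refine Submodule.span_le.mpr ?_
  rintro _ ⟨⟨a, b, J⟩, hlt, rfl⟩
  change a + b + J.card < w + 1 at hlt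
  rcases Nat.lt_succ_iff_lt_or_eq.mp hlt with hlt | rfl
  · exact Submodule.subset_span ⟨(a, b, J), hlt, rfl⟩
  · exact quotMonomial_mem_monomialSpan_of_le hw

theorem monomialSpan_le_of_le {w : ℕ} (hw : m ≤ w) : monomialSpan m w ≤ monomialSpan m m := by
  induction w, hw using Nat.le_induction with
  | base => exact le_rfl
  | succ w hw ih => exact (monomialSpan_succ_le hw).trans ih

theorem quotMonomial_mem_monomialSpan (a b : ℕ) (J : Finset (Fin (2 * m + 1))) :
    quotMonomial m a b J ∈ monomialSpan m m :=
  monomialSpan_le_of_le (le_max_left m (a + b + J.card + 1))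
    (Submodule.subset_span
      ⟨(a, b, J), show a + b + J.card < max m (a + b + J.card + 1) by omega, rfl⟩)

theorem exists_mk_X_mul_quotMonomial (i : Fin (2 * m + 1 + 2)) (a b : ℕ)
    (J : Finset (Fin (2 * m + 1))) :
    ∃ a' b' J', π (X i) * quotMonomial m a b J = quotMonomial m a' b' J' := by
  induction i using Fin.cases with
  | zero => exact ⟨a + 1, b, J, by simp only [quotMonomial_eq]; ring⟩
  | succ i =>
    induction i using Fin.cases with
    | zero => exact ⟨a, b + 1, J, by simp only [quotMonomial_eq, Fin.succ_zero_eq_one]; ring⟩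
    | succ k =>
      by_cases hk : k ∈ J
      · refine ⟨a, b + 1, J.erase k, ?_⟩
        rw [quotMonomial_eq, quotMonomial_eq, ← Finset.mul_prod_erase J _ hk,
          ← mk_X_succ_succ_sq k]
        ring
      · refine ⟨a, b, insert k J, ?_⟩
        rw [quotMonomial_eq, quotMonomial_eq, Finset.prod_insert hk]
        ring

theorem mk_X_mul_mem_monomialSpan (i : Fin (2 * m + 1 + 2)) {x} (hx : x ∈ monomialSpan m m) :
    π (X i) * x ∈ monomialSpan m m := by
  induction hx using Submodule.span_induction with
  | mem _ h =>
    obtain ⟨⟨a, b, J⟩, -, rfl⟩ := h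
    obtain ⟨a', b', J', e⟩ := exists_mk_X_mul_quotMonomial i a b J
    rw [e]
    exact quotMonomial_mem_monomialSpan a' b' J'
  | zero => rw [mul_zero]; exact zero_mem _
  | add x y _ _ hx hy => rw [mul_add]; exact add_mem hx hy
  | smul c x _ hx => rw [mul_smul_comm]; exact Submodule.smul_mem _ c hx

theorem mk_mem_monomialSpan (p : MvPolynomial (Fin (2 * m + 1 + 2)) ℚ) :
    π p ∈ monomialSpan m m := by
  induction p using MvPolynomial.induction_on with
  | C c =>
    have h1 : quotMonomial m 0 0 ∅ = 1 := by simp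
    rw [← algebraMap_eq, Ideal.Quotient.mk_algebraMap, Algebra.algebraMap_eq_smul_one, ← h1]
    exact Submodule.smul_mem _ c (quotMonomial_mem_monomialSpan 0 0 ∅)
  | add p q hp hq => rw [map_add]; exact add_mem hp hq
  | mul_X p i hp => rw [map_mul, mul_comm (π p)]; exact mk_X_mul_mem_monomialSpan i hp

end Quotient

/-- In `H = ℚ[α,β,δ_1,…,δ_n]/I`, the images of the monomials
`α^a β^b ∏_{k∈J} δ_k` with `a + b + |J| < m` span `H` as a `ℚ`-vector space. -/
theorem monomials_span (m : ℕ) :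
    Submodule.span ℚ
      ((fun t : ℕ × ℕ × Finset (Fin (2 * m + 1)) =>
          Ideal.Quotient.mk (relIdeal m)
            (X 0 ^ t.1 * X 1 ^ t.2.1 * ∏ k ∈ t.2.2, X k.succ.succ)) ''
        {t | t.1 + t.2.1 + t.2.2.card < m}) = ⊤ := by
  refine eq_top_iff.mpr fun x _ => ?_
  obtain ⟨p, rfl⟩ := Ideal.Quotient.mk_surjective x
  exact mk_mem_monomialSpan p
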